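/- Characterization of match-preserving permutations without unmatched units (Proposition 1): let T and C be finite disjoint sets of units with |T| = |C| and all propensity scores distinct, let μ : T → C be an optimal pair matching, and let S be a subset of the K matched pairs {(t, μ(t)) : t ∈ T}. Form the relabeled study in which, for each pair in S, the treated and control roles are exchanged, giving a new treated set T′ and new control set C′ = (T ∪ C) ∖ T′. Then the same grouping into pairs {t, μ(t)} is an optimal pair matching of T′ to C′ if and only if S is a union of connected components of the overlap graph of the pairs {(t, μ(t)) : t ∈ T}. -/

import Mathlib

/-- `μ` is a pair matching of the treated units `T` to the control units `C`:
an injection (on `T`) mapping each treated unit to a control unit. -/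
def IsMatching {α : Type*} (T C : Finset α) (μ : α → α) : Prop :=
  Set.InjOn μ ↑T ∧ ∀ t ∈ T, μ t ∈ C

/-- The cost of a pair matching: the total absolute propensity-score
discrepancy `Σ_{t ∈ T} |λ_t − λ_{μ(t)}|`. -/
noncomputable def matchCost {α : Type*} (score : α → ℝ) (T : Finset α) (μ : α → α) : ℝ :=
  ∑ t ∈ T, |score t - score (μ t)|

/-- `μ` is an optimal pair matching of `T` to `C`: it is a pair matching and
it minimizes the cost over all pair matchings of `T` to `C`. -/
def IsOptimalMatching {α : Type*} (score : α → ℝ) (T C : Finset α) (μ : α → α) : Prop :=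
  IsMatching T C μ ∧
    ∀ ν : α → α, IsMatching T C ν → matchCost score T μ ≤ matchCost score T ν

/-- Two matched pairs, with respective score pairs `(x1, y1)` and `(x2, y2)`, are
overlapping if, writing each pair's scores as `(hᵢ, ℓᵢ)` with `hᵢ > ℓᵢ`,
either `h1 > h2 > ℓ1` or `h2 > h1 > ℓ2`. -/
def Overlapping (x1 y1 x2 y2 : ℝ) : Prop :=
  (max x1 y1 > max x2 y2 ∧ max x2 y2 > min x1 y1) ∨
  (max x2 y2 > max x1 y1 ∧ max x1 y1 > min x2 y2)

/-- The overlap graph of the matched pairs `{(t, μ t) : t ∈ T}`: its vertices are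
the matched pairs (identified with their treated units `t ∈ T`), with an edge
between two distinct pairs exactly when they are overlapping. -/
def overlapGraph {α : Type*} (score : α → ℝ) (T : Finset α) (μ : α → α) :
    SimpleGraph {x : α // x ∈ T} :=
  SimpleGraph.fromRel fun p q =>
    Overlapping (score ↑p) (score (μ ↑p)) (score ↑q) (score (μ ↑q))

/-!
Write `|a - b| = ∫ |𝟙[a < x] - 𝟙[b < x]| dx`. Summing over the pairs of any perfect matching of
`A` onto `B`, the cost is at least `∫ |#{a ∈ A | λ_a < x} - #{b ∈ B | λ_b < x}| dx`, with equality
exactly when, at each `x`, all pairs straddling `x` point the same way. In an optimal `μ` this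
holds (two oppositely oriented straddling pairs could be uncrossed, lowering the cost), and any two
pairs straddling a common point overlap. Exchanging roles along `S` keeps the pairs and reverses
the orientation of those in `S`. If `S` is a union of components, the straddling pairs at each `x`
lie in one component and still agree, so the bound is attained; if an overlapping pair is split by
`S`, the new matching has two oppositely oriented pairs straddling a common point, so it is not
optimal.
-/

open MeasureTheory
open scoped Interval

lemma Finset.abs_sum_eq_sum_abs_of_mul_nonneg {ι R : Type*} [CommRing R] [LinearOrder R]
    [IsStrictOrderedRing R] {s : Finset ι} {f : ι → R}
    (h : ∀ i ∈ s, ∀ j ∈ s, 0 ≤ f i * f j) : |∑ i ∈ s, f i| = ∑ i ∈ s, |f i| := by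
  by_cases hnonneg : ∀ i ∈ s, 0 ≤ f i
  · rw [Finset.abs_sum_of_nonneg hnonneg]
    exact Finset.sum_congr rfl fun i hi => (abs_of_nonneg (hnonneg i hi)).symm
  · push Not at hnonneg
    obtain ⟨j, hj, hfj⟩ := hnonneg
    have hnonpos : ∀ i ∈ s, f i ≤ 0 := fun i hi => by nlinarith [h i hi j hj]
    rw [abs_of_nonpos (Finset.sum_nonpos hnonpos), ← Finset.sum_neg_distrib]
    exact Finset.sum_congr rfl fun i hi => (abs_of_nonpos (hnonpos i hi)).symm

noncomputable def crossing (a b x : ℝ) : ℝ :=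
  (if a < x then 1 else 0) - (if b < x then 1 else 0)

lemma crossing_comm (a b x : ℝ) : crossing b a x = -crossing a b x := by
  unfold crossing; ring

lemma abs_crossing (a b x : ℝ) : |crossing a b x| = (Ι a b).indicator 1 x := by
  classical
  rw [Set.indicator_apply, Set.mem_uIoc, crossing]
  split_ifs <;> norm_num <;> grind

lemma crossing_eq_indicator_sub_indicator (a b : ℝ) :
    crossing a b = (Set.Ioc a b).indicator 1 - (Set.Ioc b a).indicator 1 := by
  ext x
  classical
  simp only [Pi.sub_apply, Set.indicator_apply, Set.mem_Ioc, Pi.one_apply, crossing]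
  split_ifs <;> norm_num <;> grind

lemma integrable_crossing (a b : ℝ) : Integrable (crossing a b) := by
  have hIoc (c d : ℝ) : Integrable ((Set.Ioc c d).indicator (1 : ℝ → ℝ)) :=
    (integrable_indicator_iff measurableSet_Ioc).2 (integrableOn_const measure_Ioc_lt_top.ne)
  rw [crossing_eq_indicator_sub_indicator]
  exact (hIoc a b).sub (hIoc b a)

lemma integral_abs_crossing (a b : ℝ) : ∫ x, |crossing a b x| = |a - b| := by
  simp_rw [abs_crossing]
  rw [integral_indicator_one measurableSet_uIoc, measureReal_def, Real.volume_uIoc,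
    ENNReal.toReal_ofReal (abs_nonneg _), abs_sub_comm]

lemma crossing_ne_zero_iff {a b x : ℝ} : crossing a b x ≠ 0 ↔ x ∈ Ι a b := by
  rw [← abs_ne_zero, abs_crossing, Set.indicator_apply_ne_zero]
  simp

lemma overlapping_comm {a b c d : ℝ} : Overlapping a b c d ↔ Overlapping c d a b := or_comm

lemma overlapping_iff_exists_mem_uIoc {a b c d : ℝ} (hab : a ≠ b) (hcd : c ≠ d)
    (hmax : max a b ≠ max c d) : Overlapping a b c d ↔ ∃ x, x ∈ Ι a b ∧ x ∈ Ι c d := by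
  simp only [Overlapping, Set.uIoc, Set.mem_Ioc]
  have hab' := min_lt_max.2 hab
  have hcd' := min_lt_max.2 hcd
  constructor
  · rintro (⟨h1, h2⟩ | ⟨h1, h2⟩)
    · exact ⟨max c d, ⟨h2, h1.le⟩, hcd', le_rfl⟩
    · exact ⟨max a b, ⟨hab', le_rfl⟩, h2, h1.le⟩
  · rintro ⟨x, ⟨h1, h2⟩, h3, h4⟩
    rcases hmax.lt_or_gt with h | h
    · exact Or.inr ⟨h, by linarith⟩
    · exact Or.inl ⟨h, by linarith⟩

section Matching

variable {α : Type*} {score : α → ℝ} {A B : Finset α} {m ρ : α → α} {u v : α}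

lemma matchCost_eq_integral (score : α → ℝ) (A : Finset α) (m : α → α) :
    matchCost score A m = ∫ x, ∑ a ∈ A, |crossing (score a) (score (m a)) x| := by
  rw [integral_finsetSum _ fun a _ => (integrable_crossing _ _).abs]
  simp only [integral_abs_crossing, matchCost]

noncomputable def imbalance (score : α → ℝ) (A B : Finset α) (x : ℝ) : ℝ :=
  ∑ a ∈ A, (if score a < x then 1 else 0) - ∑ b ∈ B, (if score b < x then 1 else 0)

lemma IsMatching.image_eq [DecidableEq α] (hρ : IsMatching A B ρ) (hcard : A.card = B.card) :
    A.image ρ = B :=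
  Finset.eq_of_subset_of_card_le (Finset.image_subset_iff.2 hρ.2)
    (by rw [Finset.card_image_of_injOn hρ.1, hcard])

lemma IsMatching.imbalance_eq_sum_crossing (hρ : IsMatching A B ρ) (hcard : A.card = B.card)
    (x : ℝ) : imbalance score A B x = ∑ a ∈ A, crossing (score a) (score (ρ a)) x := by
  classical
  rw [imbalance, ← hρ.image_eq hcard, Finset.sum_image hρ.1, ← Finset.sum_sub_distrib]
  rfl

lemma IsMatching.integral_abs_imbalance_le_matchCost (hρ : IsMatching A B ρ)
    (hcard : A.card = B.card) : ∫ x, |imbalance score A B x| ≤ matchCost score A ρ := by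
  rw [matchCost_eq_integral]
  refine integral_mono ?_ (integrable_finsetSum _ fun a _ => (integrable_crossing _ _).abs)
    fun x => ?_
  · simp_rw [hρ.imbalance_eq_sum_crossing hcard]
    exact (integrable_finsetSum _ fun a _ => integrable_crossing _ _).abs
  · rw [hρ.imbalance_eq_sum_crossing hcard]
    exact Finset.abs_sum_le_sum_abs _ _

lemma IsMatching.isOptimalMatching_of_sum_abs_crossing_eq (hm : IsMatching A B m)
    (hcard : A.card = B.card)
    (h : ∀ x, ∑ a ∈ A, |crossing (score a) (score (m a)) x| = |imbalance score A B x|) :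
    IsOptimalMatching score A B m := by
  refine ⟨hm, fun ρ hρ => ?_⟩
  rw [matchCost_eq_integral, funext h]
  exact hρ.integral_abs_imbalance_le_matchCost hcard

lemma abs_sub_add_abs_sub_lt_of_lt_le {a b c d x : ℝ} (ha : a < x) (hb : x ≤ b) (hd : d < x)
    (hc : x ≤ c) : |a - d| + |c - b| < |a - b| + |c - d| := by
  rw [abs_of_neg (by linarith : a - b < 0), abs_of_pos (by linarith : 0 < c - d)]
  rcases abs_cases (a - d) with ⟨h, -⟩ | ⟨h, -⟩ <;>
    rcases abs_cases (c - b) with ⟨h', -⟩ | ⟨h', -⟩ <;> linarith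

lemma IsMatching.comp_swap [DecidableEq α] (hm : IsMatching A B m) (hu : u ∈ A) (hv : v ∈ A) :
    IsMatching A B (m ∘ Equiv.swap u v) := by
  have hswap : Set.MapsTo (Equiv.swap u v) A A := fun a ha => by
    rw [Equiv.swap_apply_def]; split_ifs <;> assumption
  exact ⟨hm.1.comp (Equiv.swap u v).injective.injOn hswap, fun a ha => hm.2 _ (hswap ha)⟩

lemma matchCost_comp_swap_add [DecidableEq α] (hu : u ∈ A) (hv : v ∈ A) (huv : u ≠ v) :
    matchCost score A (m ∘ Equiv.swap u v) + (|score u - score (m u)| + |score v - score (m v)|)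
      = matchCost score A m + (|score u - score (m v)| + |score v - score (m u)|) := by
  have hpair : {u, v} ⊆ A := Finset.insert_subset hu (Finset.singleton_subset_iff.2 hv)
  have hrest : ∑ a ∈ A \ {u, v}, |score a - score ((m ∘ Equiv.swap u v) a)|
      = ∑ a ∈ A \ {u, v}, |score a - score (m a)| := by
    refine Finset.sum_congr rfl fun a ha => ?_
    simp only [Finset.mem_sdiff, Finset.mem_insert, Finset.mem_singleton, not_or] at ha
    rw [Function.comp_apply, Equiv.swap_apply_of_ne_of_ne ha.2.1 ha.2.2]
  unfold matchCost
  rw [← Finset.sum_sdiff hpair, ← Finset.sum_sdiff hpair (f := fun a => |score a - score (m a)|),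
    Finset.sum_pair huv, Finset.sum_pair huv, hrest]
  simp only [Function.comp_apply, Equiv.swap_apply_left, Equiv.swap_apply_right]
  ring

lemma IsOptimalMatching.false_of_opposite_crossing (hm : IsOptimalMatching score A B m)
    (hu : u ∈ A) (hv : v ∈ A) {x : ℝ} (hux : score u < x) (hxu : x ≤ score (m u))
    (hvx : score (m v) < x) (hxv : x ≤ score v) : False := by
  classical
  have huv : u ≠ v := by rintro rfl; linarith
  have hopt := hm.2 _ (hm.1.comp_swap hu hv)
  have hcost := matchCost_comp_swap_add (score := score) (m := m) hu hv huv
  have hgain := abs_sub_add_abs_sub_lt_of_lt_le hux hxu hvx hxv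
  linarith

lemma IsOptimalMatching.crossing_mul_crossing_nonneg (hm : IsOptimalMatching score A B m)
    (hu : u ∈ A) (hv : v ∈ A) (x : ℝ) :
    0 ≤ crossing (score u) (score (m u)) x * crossing (score v) (score (m v)) x := by
  unfold crossing
  split_ifs <;> norm_num
  next hux hxu hxv hvx =>
    exact hm.false_of_opposite_crossing hu hv hux (not_lt.1 hxu) hvx (not_lt.1 hxv)
  next hxu hux hvx hxv =>
    exact hm.false_of_opposite_crossing hv hu hvx (not_lt.1 hxv) hux (not_lt.1 hxu)

end Matching

section Exchange

variable {α : Type*} {score : α → ℝ} {T C S : Finset α} {μ ν : α → α}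

lemma IsMatching.score_ne (hdisj : Disjoint T C) (hinj : Set.InjOn score (↑T ∪ ↑C))
    (hμ : IsMatching T C μ) {t : α} (ht : t ∈ T) : score t ≠ score (μ t) := fun h =>
  Finset.disjoint_left.1 hdisj ht (hinj (Or.inl ht) (Or.inr (hμ.2 t ht)) h ▸ hμ.2 t ht)

lemma IsMatching.max_score_ne (hdisj : Disjoint T C) (hinj : Set.InjOn score (↑T ∪ ↑C))
    (hμ : IsMatching T C μ) {t u : α} (ht : t ∈ T) (hu : u ∈ T) (htu : t ≠ u) :
    max (score t) (score (μ t)) ≠ max (score u) (score (μ u)) := by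
  have hT (a : α) (ha : a ∈ T) : a ∈ (↑T ∪ ↑C : Set α) := Or.inl ha
  have hC (a : α) (ha : a ∈ T) : μ a ∈ (↑T ∪ ↑C : Set α) := Or.inr (hμ.2 a ha)
  have hTC (a b : α) (ha : a ∈ T) (hb : b ∈ T) : a ≠ μ b := fun h =>
    Finset.disjoint_left.1 hdisj ha (h ▸ hμ.2 b hb)
  rcases max_choice (score t) (score (μ t)) with h | h <;>
    rcases max_choice (score u) (score (μ u)) with h' | h' <;> rw [h, h'] <;> intro heq
  · exact htu (hinj (hT t ht) (hT u hu) heq)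
  · exact hTC t u ht hu (hinj (hT t ht) (hC u hu) heq)
  · exact hTC u t hu ht (hinj (hT u hu) (hC t ht) heq.symm)
  · exact htu (hμ.1 ht hu (hinj (hC t ht) (hC u hu) heq))

lemma overlapGraph_adj_iff_exists_mem_uIoc (hdisj : Disjoint T C)
    (hinj : Set.InjOn score (↑T ∪ ↑C)) (hμ : IsMatching T C μ) {t u : {x // x ∈ T}} :
    (overlapGraph score T μ).Adj t u ↔
      t ≠ u ∧ ∃ x, x ∈ Ι (score t) (score (μ t)) ∧ x ∈ Ι (score u) (score (μ u)) := by
  rw [overlapGraph, SimpleGraph.fromRel_adj, or_iff_left_of_imp overlapping_comm.1]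
  exact and_congr_right fun htu => overlapping_iff_exists_mem_uIoc (hμ.score_ne hdisj hinj t.2)
    (hμ.score_ne hdisj hinj u.2) (hμ.max_score_ne hdisj hinj t.2 u.2 (htu <| Subtype.ext ·))

variable [DecidableEq α]

lemma disjoint_sdiff_image (hdisj : Disjoint T C) (hμ : IsMatching T C μ) (hS : S ⊆ T) :
    Disjoint (T \ S) (S.image μ) :=
  Finset.disjoint_left.2 fun _ ha hb =>
    have ⟨_, hs, hμs⟩ := Finset.mem_image.1 hb
    Finset.disjoint_left.1 hdisj (Finset.mem_sdiff.1 ha).1 (hμs ▸ hμ.2 _ (hS hs))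

lemma isMatching_exchange (hdisj : Disjoint T C) (hμ : IsMatching T C μ) (hS : S ⊆ T)
    (hν1 : ∀ t ∈ T \ S, ν t = μ t) (hν2 : ∀ t ∈ S, ν (μ t) = t) :
    IsMatching ((T \ S) ∪ S.image μ) ((T ∪ C) \ ((T \ S) ∪ S.image μ)) ν := by
  have hC : ∀ t ∈ T, μ t ∈ C := hμ.2
  have hTC : ∀ a ∈ T, a ∉ C := fun _ ha => Finset.disjoint_left.1 hdisj ha
  have hμinj : ∀ t ∈ T, ∀ u ∈ T, μ t = μ u → t = u := fun t ht u hu => hμ.1 ht hu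
  exact ⟨fun a ha b hb hab => by grind, fun a ha => by grind⟩

lemma card_exchange (hdisj : Disjoint T C) (hcard : T.card = C.card) (hμ : IsMatching T C μ)
    (hS : S ⊆ T) :
    ((T \ S) ∪ S.image μ).card = ((T ∪ C) \ ((T \ S) ∪ S.image μ)).card := by
  have hT' : ((T \ S) ∪ S.image μ).card = T.card := by
    rw [Finset.card_union_of_disjoint (disjoint_sdiff_image hdisj hμ hS),
      Finset.card_image_of_injOn (hμ.1.mono hS), Finset.card_sdiff_add_card_eq_card hS]
  have hsub : (T \ S) ∪ S.image μ ⊆ T ∪ C :=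
    Finset.union_subset (Finset.sdiff_subset.trans Finset.subset_union_left)
      (Finset.image_subset_iff.2 fun t ht => Finset.mem_union_right _ (hμ.2 t (hS ht)))
  rw [Finset.card_sdiff_of_subset hsub, Finset.card_union_of_disjoint hdisj, hT']
  omega

lemma sum_exchange {M : Type*} [AddCommMonoid M] (hdisj : Disjoint T C) (hμ : IsMatching T C μ)
    (hS : S ⊆ T) (hν1 : ∀ t ∈ T \ S, ν t = μ t) (hν2 : ∀ t ∈ S, ν (μ t) = t)
    (g : α → α → M) :
    ∑ a ∈ (T \ S) ∪ S.image μ, g a (ν a) = ∑ t ∈ T, if t ∈ S then g (μ t) t else g t (μ t) := by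
  rw [Finset.sum_union (disjoint_sdiff_image hdisj hμ hS), Finset.sum_image (hμ.1.mono hS),
    Finset.sum_ite, Finset.filter_mem_eq_inter, Finset.inter_eq_right.2 hS,
    Finset.filter_notMem_eq_sdiff, add_comm]
  congr 1
  · exact Finset.sum_congr rfl fun t ht => by rw [hν2 t ht]
  · exact Finset.sum_congr rfl fun t ht => by rw [hν1 t ht]

lemma exists_exchange (hdisj : Disjoint T C) (hμ : IsMatching T C μ) :
    ∃ ν : α → α, (∀ t ∈ T, ν t = μ t) ∧ ∀ t ∈ T, ν (μ t) = t := by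
  rcases isEmpty_or_nonempty α with hα | hα
  · exact ⟨id, fun t => isEmptyElim t, fun t => isEmptyElim t⟩
  refine ⟨fun a => if a ∈ T then μ a else Function.invFunOn μ T a, fun t ht => if_pos ht,
    fun t ht => ?_⟩
  dsimp only
  rw [if_neg fun h => Finset.disjoint_left.1 hdisj h (hμ.2 t ht)]
  exact hμ.1.leftInvOn_invFunOn ht

lemma IsOptimalMatching.mem_of_adj_of_exchange (hdisj : Disjoint T C)
    (hinj : Set.InjOn score (↑T ∪ ↑C)) (hopt : IsOptimalMatching score T C μ)
    (hν1 : ∀ t ∈ T \ S, ν t = μ t) (hν2 : ∀ t ∈ S, ν (μ t) = t)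
    (hν : IsOptimalMatching score ((T \ S) ∪ S.image μ) ((T ∪ C) \ ((T \ S) ∪ S.image μ)) ν)
    {t u : {x // x ∈ T}} (hadj : (overlapGraph score T μ).Adj t u) (ht : ↑t ∈ S) : ↑u ∈ S := by
  by_contra hu
  have hu' : ↑u ∈ T \ S := Finset.mem_sdiff.2 ⟨u.2, hu⟩
  obtain ⟨-, x, hxt, hxu⟩ := (overlapGraph_adj_iff_exists_mem_uIoc hdisj hinj hopt.1).1 hadj
  have hcross : crossing (score t) (score (μ t)) x * crossing (score u) (score (μ u)) x ≠ 0 :=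
    mul_ne_zero (crossing_ne_zero_iff.2 hxt) (crossing_ne_zero_iff.2 hxu)
  have hsame := hopt.crossing_mul_crossing_nonneg t.2 u.2 x
  have hopposite := hν.crossing_mul_crossing_nonneg (u := μ t) (v := u)
    (Finset.mem_union_right _ (Finset.mem_image_of_mem μ ht)) (Finset.mem_union_left _ hu') x
  rw [hν2 t ht, hν1 u hu', crossing_comm, neg_mul] at hopposite
  exact hcross (by linarith)

lemma IsOptimalMatching.abs_sum_exchange_crossing (hdisj : Disjoint T C)
    (hinj : Set.InjOn score (↑T ∪ ↑C)) (hopt : IsOptimalMatching score T C μ)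
    (hclosed : ∀ p q : {x // x ∈ T}, ↑p ∈ S → (overlapGraph score T μ).Reachable p q → ↑q ∈ S)
    (x : ℝ) :
    |∑ t ∈ T, if t ∈ S then crossing (score (μ t)) (score t) x
      else crossing (score t) (score (μ t)) x| = ∑ t ∈ T, |crossing (score t) (score (μ t)) x| := by
  simp only [crossing_comm _ (score (μ _))]
  rw [Finset.abs_sum_eq_sum_abs_of_mul_nonneg]
  · exact Finset.sum_congr rfl fun t _ => by split_ifs <;> simp only [abs_neg]
  intro t ht u hu
  have hsame := hopt.crossing_mul_crossing_nonneg ht hu x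
  by_cases hzero : crossing (score t) (score (μ t)) x * crossing (score u) (score (μ u)) x = 0
  · split_ifs <;> simp only [neg_mul, mul_neg, hzero, neg_zero, le_refl]
  have hiff : t ∈ S ↔ u ∈ S := by
    rcases eq_or_ne t u with rfl | htu
    · rfl
    have hadj : (overlapGraph score T μ).Adj ⟨t, ht⟩ ⟨u, hu⟩ :=
      (overlapGraph_adj_iff_exists_mem_uIoc hdisj hinj hopt.1).2
        ⟨(htu <| congrArg Subtype.val ·), x, crossing_ne_zero_iff.1 (left_ne_zero_of_mul hzero),
        crossing_ne_zero_iff.1 (right_ne_zero_of_mul hzero)⟩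
    exact ⟨fun h => hclosed _ _ h hadj.reachable, fun h => hclosed _ _ h hadj.symm.reachable⟩
  split_ifs with htS huS huS
  · rwa [neg_mul_neg]
  · exact absurd (hiff.1 htS) huS
  · exact absurd (hiff.2 huS) htS
  · exact hsame

end Exchange

/-- Characterization of match-preserving permutations without unmatched units
(Proposition 1): let `T` and `C` be finite disjoint sets of units with
`|T| = |C|` and distinct propensity scores, let `μ` be an optimal pair matching
of `T` to `C`, and let `S ⊆ T` index a subset of the matched pairs. Exchange the
treated and control roles within each pair in `S`, giving the new treated set
`T′ = (T \ S) ∪ μ(S)` and new control set `C′ = (T ∪ C) \ T′`. Then the same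
grouping into pairs `{t, μ t}` (i.e. any `ν` agreeing with `μ` on unflipped
pairs and mapping `μ t ↦ t` on flipped pairs) is an optimal pair matching of
`T′` to `C′` if and only if `S` is a union of connected components of the
overlap graph of the pairs (i.e. `S` is closed under reachability). -/
theorem match_preserving_iff_union_of_components {α : Type*} [DecidableEq α]
    (score : α → ℝ) (T C : Finset α)
    (hdisj : Disjoint T C) (hcard : T.card = C.card)
    (hinj : Set.InjOn score (↑T ∪ ↑C))
    (μ : α → α) (hopt : IsOptimalMatching score T C μ)
    (S : Finset α) (hS : S ⊆ T) :
    (∀ ν : α → α,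
        (∀ t ∈ T \ S, ν t = μ t) → (∀ t ∈ S, ν (μ t) = t) →
        IsOptimalMatching score ((T \ S) ∪ S.image μ)
          ((T ∪ C) \ ((T \ S) ∪ S.image μ)) ν)
      ↔ (∀ p q : {x : α // x ∈ T}, ↑p ∈ S →
            (overlapGraph score T μ).Reachable p q → ↑q ∈ S) := by
  constructor
  · intro hexchange p q hp hpq
    obtain ⟨ν, hνT, hνC⟩ := exists_exchange hdisj hopt.1
    have hν1 : ∀ t ∈ T \ S, ν t = μ t := fun t ht => hνT t (Finset.mem_sdiff.1 ht).1
    have hν2 : ∀ t ∈ S, ν (μ t) = t := fun t ht => hνC t (hS ht)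
    have hν := hexchange ν hν1 hν2
    rw [SimpleGraph.reachable_iff_reflTransGen] at hpq
    induction hpq with
    | refl => exact hp
    | tail _ hadj ih => exact hopt.mem_of_adj_of_exchange hdisj hinj hν1 hν2 hν hadj ih
  · intro hclosed ν hν1 hν2
    have hν := isMatching_exchange hdisj hopt.1 hS hν1 hν2
    have hcard' := card_exchange hdisj hcard hopt.1 hS
    refine hν.isOptimalMatching_of_sum_abs_crossing_eq hcard' fun x => ?_
    rw [hν.imbalance_eq_sum_crossing hcard',
      sum_exchange hdisj hopt.1 hS hν1 hν2 fun a b => |crossing (score a) (score b) x|,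
      sum_exchange hdisj hopt.1 hS hν1 hν2 fun a b => crossing (score a) (score b) x,
      hopt.abs_sum_exchange_crossing hdisj hinj hclosed x]
    simp only [crossing_comm _ (score (μ _)), abs_neg, ite_self]
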